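/- Let σ > 0, δ ∈ ℝ, r ∈ ℝ, set ρ = r − δ, and let P : (0,∞) → ℝ be twice continuously differentiable satisfying (1/2)σ²z²P''(z) + (1 − δz)P'(z) − ρP(z) = 0 for all z > 0. Define S'(z) = z^{2δ/σ²} e^{2/(σ²z)} and m'(z) = 2/(σ²z²S'(z)). Then for all z > 0, (d/dz)[(P(z) − zP'(z))/S'(z)] = (1 − rz) P(z) m'(z). -/

import Mathlib

/-!
Write `S(z) = z^(2δ/σ²) e^(2/(σ²z))`, so that `S'/S = 2δ/(σ²z) - 2/(σ²z²) = -2(1 - δz)/(σ²z²)`,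
and `N = P - zP'`, so that `N' = -zP''`. Then `(N/S)' = (N' - N S'/S)/S`; eliminating `P''` with the
ODE, the `P'` terms cancel and what is left is `2(1 - δz - ρz)P/(σ²z²S) = (1 - rz) P m'`.
-/

open Real

lemma hasDerivAt_rpow_mul_exp_div {a c z : ℝ} (hz : 0 < z) :
    HasDerivAt (fun t => t ^ a * exp (c / t)) (z ^ a * exp (c / z) * (a / z - c / z ^ 2)) z := by
  have hpow : HasDerivAt (fun t => t ^ a) (a * z ^ (a - 1)) z :=
    hasDerivAt_rpow_const (Or.inl hz.ne')
  have hexp : HasDerivAt (fun t => exp (c / t)) (exp (c / z) * (c * -(z ^ 2)⁻¹)) z := by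
    simpa only [div_eq_mul_inv] using ((hasDerivAt_inv hz.ne').const_mul c).exp
  refine (hpow.mul hexp).congr_deriv ?_
  rw [rpow_sub_one hz.ne']
  field_simp
  ring

section

variable {𝕜 : Type*} [NontriviallyNormedField 𝕜]

lemma HasDerivAt.div_of_logDeriv {f g : 𝕜 → 𝕜} {f' ℓ x : 𝕜} (hf : HasDerivAt f f' x)
    (hg : HasDerivAt g (g x * ℓ) x) (hx : g x ≠ 0) :
    HasDerivAt (fun t => f t / g t) ((f' - f x * ℓ) / g x) x := by
  refine (hf.div hg hx).congr_deriv ?_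
  field_simp

lemma hasDerivAt_sub_mul_deriv {f : 𝕜 → 𝕜} {x : 𝕜} (hf : DifferentiableAt 𝕜 f x)
    (hf' : DifferentiableAt 𝕜 (deriv f) x) :
    HasDerivAt (fun t => f t - t * deriv f t) (-(x * deriv (deriv f) x)) x := by
  refine (hf.hasDerivAt.sub ((hasDerivAt_id x).mul hf'.hasDerivAt)).congr_deriv ?_
  simp

end

/-- Canonical form identity: `((P − zP')/S')' = (1 − rz) P m'` when `ρ = r − δ`. -/
theorem stmt_4 (σ δ r : ℝ) (hσ : 0 < σ) (P : ℝ → ℝ)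
    (hP : ContDiffOn ℝ 2 P (Set.Ioi 0))
    (hODE : ∀ z > 0,
      (1/2)*σ^2*z^2 * deriv (deriv P) z + (1 - δ*z) * deriv P z - (r - δ) * P z = 0) :
    ∀ z > 0,
      deriv (fun t : ℝ => (P t - t * deriv P t) / (t ^ (2*δ/σ^2) * Real.exp (2/(σ^2*t)))) z
        = (1 - r*z) * P z * (2 / (σ^2 * z^2 * (z ^ (2*δ/σ^2) * Real.exp (2/(σ^2*z))))) := by
  intro z hz
  have hnhds : Set.Ioi (0 : ℝ) ∈ nhds z := Ioi_mem_nhds hz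
  have hP₁ : DifferentiableAt ℝ P z := (hP.differentiableOn two_ne_zero).differentiableAt hnhds
  have hP₂ : DifferentiableAt ℝ (deriv P) z :=
    ((hP.deriv_of_isOpen isOpen_Ioi (m := 1) (by norm_num)).differentiableOn one_ne_zero)
      |>.differentiableAt hnhds
  have hS : HasDerivAt (fun t => t ^ (2*δ/σ^2) * exp (2/(σ^2*t)))
      (z ^ (2*δ/σ^2) * exp (2/(σ^2*z)) * (2*δ/σ^2/z - 2/σ^2/z^2)) z := by
    simpa only [div_mul_eq_div_div] using hasDerivAt_rpow_mul_exp_div (a := 2*δ/σ^2) (c := 2/σ^2) hz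
  have hS₀ : z ^ (2*δ/σ^2) * exp (2/(σ^2*z)) ≠ 0 := by positivity
  rw [((hasDerivAt_sub_mul_deriv hP₁ hP₂).div_of_logDeriv hS hS₀).deriv]
  field_simp
  linear_combination (-2 * z) * hODE z hz
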